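/- If (Σ, σ, γ) is a factorisation of χ and (M, X, ρ) is a right χ-coalgebra, then (ΣM, X, γM ∘ Σρ ∘ σM) is again a right χ-coalgebra. -/

import Mathlib

open CategoryTheory

universe v u

namespace BohmStefan

variable {A : Type u} [Category.{v} A]

/-- A distributive law `σ : TΣ ⟶ ΣT` between a comonad `Tm` and an endofunctor `S`,
with components `σ_X : T(S X) ⟶ S(T X)`. -/
def IsComonadEndoLaw (Tm : Comonad A) (S : A ⥤ A)
    (σ : S ⋙ (Tm : A ⥤ A) ⟶ (Tm : A ⥤ A) ⋙ S) : Prop :=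
  (∀ X : A, σ.app X ≫ S.map (Tm.δ.app X) =
      Tm.δ.app (S.obj X) ≫ (Tm : A ⥤ A).map (σ.app X) ≫ σ.app (Tm.obj X)) ∧
  (∀ X : A, σ.app X ≫ S.map (Tm.ε.app X) = Tm.ε.app (S.obj X))

/-- A distributive law `γ : ΣC ⟶ CΣ` between an endofunctor `S` and a comonad `Cm`,
with components `γ_X : S(C X) ⟶ C(S X)`. -/
def IsEndoComonadLaw (S : A ⥤ A) (Cm : Comonad A)
    (γ : (Cm : A ⥤ A) ⋙ S ⟶ S ⋙ (Cm : A ⥤ A)) : Prop :=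
  (∀ X : A, γ.app X ≫ Cm.δ.app (S.obj X) =
      S.map (Cm.δ.app X) ≫ γ.app (Cm.obj X) ≫ (Cm : A ⥤ A).map (γ.app X)) ∧
  (∀ X : A, γ.app X ≫ Cm.ε.app (S.obj X) = S.map (Cm.ε.app X))

/-- A comonad distributive law `χ : Tm ⟶ Cm`. -/
def IsComonadDistLaw (Tm Cm : Comonad A)
    (χ : (Cm : A ⥤ A) ⋙ (Tm : A ⥤ A) ⟶ (Tm : A ⥤ A) ⋙ (Cm : A ⥤ A)) : Prop :=
  IsComonadEndoLaw Tm (Cm : A ⥤ A) χ ∧ IsEndoComonadLaw (Tm : A ⥤ A) Cm χ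

/-- The Yang-Baxter condition for `(S, σ, γ)` with respect to `χ`. -/
def IsYangBaxter (Tm Cm : Comonad A)
    (χ : (Cm : A ⥤ A) ⋙ (Tm : A ⥤ A) ⟶ (Tm : A ⥤ A) ⋙ (Cm : A ⥤ A)) (S : A ⥤ A)
    (σ : S ⋙ (Tm : A ⥤ A) ⟶ (Tm : A ⥤ A) ⋙ S)
    (γ : (Cm : A ⥤ A) ⋙ S ⟶ S ⋙ (Cm : A ⥤ A)) : Prop :=
  ∀ X : A, σ.app (Cm.obj X) ≫ S.map (χ.app X) ≫ γ.app (Tm.obj X) =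
    (Tm : A ⥤ A).map (γ.app X) ≫ χ.app (S.obj X) ≫ (Cm : A ⥤ A).map (σ.app X)

/-- `(S, σ, γ)` is a factorisation of the distributive law `χ : Tm ⟶ Cm`. -/
def IsFactorisation (Tm Cm : Comonad A)
    (χ : (Cm : A ⥤ A) ⋙ (Tm : A ⥤ A) ⟶ (Tm : A ⥤ A) ⋙ (Cm : A ⥤ A)) (S : A ⥤ A)
    (σ : S ⋙ (Tm : A ⥤ A) ⟶ (Tm : A ⥤ A) ⋙ S)
    (γ : (Cm : A ⥤ A) ⋙ S ⟶ S ⋙ (Cm : A ⥤ A)) : Prop :=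
  IsComonadEndoLaw Tm S σ ∧ IsEndoComonadLaw S Cm γ ∧ IsYangBaxter Tm Cm χ S σ γ


/-- A right `χ`-coalgebra `(M, 𝒳, ρ)` for a comonad distributive law `χ : Tm ⟶ Cm`. -/
def IsRightCoalgebra (Tm Cm : Comonad A)
    (χ : (Cm : A ⥤ A) ⋙ (Tm : A ⥤ A) ⟶ (Tm : A ⥤ A) ⋙ (Cm : A ⥤ A))
    {𝒳 : Type*} [Category 𝒳] (M : 𝒳 ⥤ A)
    (ρ : M ⋙ (Tm : A ⥤ A) ⟶ M ⋙ (Cm : A ⥤ A)) : Prop :=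
  (∀ Y : 𝒳, ρ.app Y ≫ Cm.δ.app (M.obj Y) =
      Tm.δ.app (M.obj Y) ≫ (Tm : A ⥤ A).map (ρ.app Y) ≫ χ.app (M.obj Y) ≫
        (Cm : A ⥤ A).map (ρ.app Y)) ∧
  (∀ Y : 𝒳, ρ.app Y ≫ Cm.ε.app (M.obj Y) = Tm.ε.app (M.obj Y))

def act (σ : S ⋙ (Tm : A ⥤ A) ⟶ (Tm : A ⥤ A) ⋙ S) (γ : (Cm : A ⥤ A) ⋙ S ⟶ S ⋙ (Cm : A ⥤ A))
    {X : A} (r : Tm.obj X ⟶ Cm.obj X) : Tm.obj (S.obj X) ⟶ Cm.obj (S.obj X) :=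
  σ.app X ≫ S.map r ≫ γ.app X

section

variable {Tm Cm : Comonad A} {S : A ⥤ A}
  {σ : S ⋙ (Tm : A ⥤ A) ⟶ (Tm : A ⥤ A) ⋙ S} {γ : (Cm : A ⥤ A) ⋙ S ⟶ S ⋙ (Cm : A ⥤ A)}

theorem act_comp_ε (hσ : IsComonadEndoLaw Tm S σ) (hγ : IsEndoComonadLaw S Cm γ)
    {X : A} {r : Tm.obj X ⟶ Cm.obj X} (hr : r ≫ Cm.ε.app X = Tm.ε.app X) :
    act σ γ r ≫ Cm.ε.app (S.obj X) = Tm.ε.app (S.obj X) := by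
  simp only [act, Category.assoc, hγ.2, ← S.map_comp, hr, hσ.2]

theorem act_comp_δ
    {χ : (Cm : A ⥤ A) ⋙ (Tm : A ⥤ A) ⟶ (Tm : A ⥤ A) ⋙ (Cm : A ⥤ A)}
    (hσ : IsComonadEndoLaw Tm S σ) (hγ : IsEndoComonadLaw S Cm γ)
    (hYB : IsYangBaxter Tm Cm χ S σ γ) {X : A} {r : Tm.obj X ⟶ Cm.obj X}
    (hr : r ≫ Cm.δ.app X = Tm.δ.app X ≫ (Tm : A ⥤ A).map r ≫ χ.app X ≫ (Cm : A ⥤ A).map r) :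
    act σ γ r ≫ Cm.δ.app (S.obj X) =
      Tm.δ.app (S.obj X) ≫ (Tm : A ⥤ A).map (act σ γ r) ≫ χ.app (S.obj X) ≫
        (Cm : A ⥤ A).map (act σ γ r) := by
  have nσ : σ.app (Tm.obj X) ≫ S.map ((Tm : A ⥤ A).map r) =
      (Tm : A ⥤ A).map (S.map r) ≫ σ.app (Cm.obj X) := (σ.naturality r).symm
  have nγ : S.map ((Cm : A ⥤ A).map r) ≫ γ.app (Cm.obj X) =
      γ.app (Tm.obj X) ≫ (Cm : A ⥤ A).map (S.map r) := γ.naturality r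
  calc act σ γ r ≫ Cm.δ.app (S.obj X)
      = σ.app X ≫ S.map (r ≫ Cm.δ.app X) ≫ γ.app (Cm.obj X) ≫ (Cm : A ⥤ A).map (γ.app X) := by
        simp only [act, Category.assoc, hγ.1, S.map_comp]
    _ = (Tm.δ.app (S.obj X) ≫ (Tm : A ⥤ A).map (σ.app X)) ≫
          (σ.app (Tm.obj X) ≫ S.map ((Tm : A ⥤ A).map r)) ≫ S.map (χ.app X) ≫
          (S.map ((Cm : A ⥤ A).map r) ≫ γ.app (Cm.obj X)) ≫ (Cm : A ⥤ A).map (γ.app X) := by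
        rw [hr]
        simp only [S.map_comp, Category.assoc]
        rw [reassoc_of% (hσ.1 X)]
    _ = Tm.δ.app (S.obj X) ≫ (Tm : A ⥤ A).map (σ.app X) ≫ (Tm : A ⥤ A).map (S.map r) ≫
          (σ.app (Cm.obj X) ≫ S.map (χ.app X) ≫ γ.app (Tm.obj X)) ≫
          (Cm : A ⥤ A).map (S.map r) ≫ (Cm : A ⥤ A).map (γ.app X) := by
        rw [nσ, nγ]
        simp only [Category.assoc]
    _ = _ := by
        rw [hYB]
        simp only [act, Functor.map_comp, Category.assoc]

end

theorem act_isRightCoalgebra (Tm Cm : Comonad A)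
    (χ : (Cm : A ⥤ A) ⋙ (Tm : A ⥤ A) ⟶ (Tm : A ⥤ A) ⋙ (Cm : A ⥤ A))
    (S : A ⥤ A)
    (σ : S ⋙ (Tm : A ⥤ A) ⟶ (Tm : A ⥤ A) ⋙ S)
    (γ : (Cm : A ⥤ A) ⋙ S ⟶ S ⋙ (Cm : A ⥤ A))
    (h : IsFactorisation Tm Cm χ S σ γ)
    {𝒳 : Type*} [Category 𝒳] (M : 𝒳 ⥤ A)
    (ρ : M ⋙ (Tm : A ⥤ A) ⟶ M ⋙ (Cm : A ⥤ A))
    (hρ : IsRightCoalgebra Tm Cm χ M ρ)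
    (ρ₂ : (M ⋙ S) ⋙ (Tm : A ⥤ A) ⟶ (M ⋙ S) ⋙ (Cm : A ⥤ A))
    (hρ₂ : ∀ Y : 𝒳, ρ₂.app Y =
      σ.app (M.obj Y) ≫ S.map (ρ.app Y) ≫ γ.app (M.obj Y)) :
    IsRightCoalgebra Tm Cm χ (M ⋙ S) ρ₂ := by
  obtain ⟨hσ, hγ, hYB⟩ := h
  refine ⟨fun Y => ?_, fun Y => ?_⟩
  · rw [hρ₂]
    exact act_comp_δ hσ hγ hYB (hρ.1 Y)
  · rw [hρ₂]
    exact act_comp_ε hσ hγ (hρ.2 Y)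

end BohmStefan
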